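/- arXiv:2505.03407 — 5 statements merged into one kernel-verified Lean document; each statement's English description precedes it below -/
import Mathlib

section
/- Let U, Z be F_q-subspaces of F_{q^s}^n (viewed as an F_q-vector space) with U ∩ Z = {0}. Let D+E ∈ F_{q^s}^{mδ×n} be a matrix all of whose rows lie in U, let Δ ∈ F_{q^s}^{δ×n} be a matrix whose δ rows lie in Z and are F_q-linearly independent, and for i ∈ {1,…,m} set Q^i = (D+E) + e_i^m ⊗ Δ, partitioned into m blocks of δ rows. Then: (a) rank_{F_q}(Q^i[i]) ≤ dim_{F_q} U; in particular, if dim_{F_q} U = ns − δ then rank_{F_q}(Q^i[i]) ≤ ns − δ; and (b) for every j ≠ i, rank_{F_q}(Q^i[j]) = δ + rank_{F_q} of the submatrix of D+E consisting of the rows in blocks {1,…,m}∖{i,j}. -/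
/-- HHW subquery rank structure. With all rows of `D+E` in `U`, the `δ` rows of `Δ` in `Z`
`F_q`-linearly independent, `U ∩ Z = {0}`, and `Q^i = (D+E) + e_i^m ⊗ Δ` (block `j` of
`Q^i` is `(D+E)_j` plus `Δ` if `j = i`): (a) the `F_q`-rank of `Q^i` with block `i`
deleted is at most `dim_{F_q} U`, in particular at most `ns − δ` when
`dim_{F_q} U = ns − δ`; (b) for `j ≠ i`, the `F_q`-rank of `Q^i` with block `j` deleted
equals `δ` plus the `F_q`-rank of the rows of `D+E` in blocks outside `{i,j}`. -/
theorem stmt_9 (q s n k m δ : ℕ) (hq : IsPrimePow q)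
    (Fq : Type*) [Field Fq] [Fintype Fq] (hFq : Fintype.card Fq = q)
    (K : Type*) [Field K] [Algebra Fq K] [FiniteDimensional Fq K]
    (hs : Module.finrank Fq K = s)
    (U Z : Submodule Fq (Fin n → K)) (hUZ : U ⊓ Z = ⊥)
    (DE : Fin m × Fin δ → Fin n → K) (hDE : ∀ p, DE p ∈ U)
    (Δ : Fin δ → Fin n → K) (hΔ : ∀ d, Δ d ∈ Z)
    (hΔind : LinearIndependent Fq Δ)
    (i : Fin m) (Q : Fin m × Fin δ → Fin n → K)
    (hQ : Q = fun p => DE p + if p.1 = i then Δ p.2 else 0) :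
    (Module.finrank Fq ↥(Submodule.span Fq
        (Set.range fun p : {j : Fin m // j ≠ i} × Fin δ => Q ((p.1 : Fin m), p.2)))
      ≤ Module.finrank Fq U) ∧
    (Module.finrank Fq U = n * s - δ →
      Module.finrank Fq ↥(Submodule.span Fq
          (Set.range fun p : {j : Fin m // j ≠ i} × Fin δ => Q ((p.1 : Fin m), p.2)))
        ≤ n * s - δ) ∧
    (∀ j : Fin m, j ≠ i →
      Module.finrank Fq ↥(Submodule.span Fq
          (Set.range fun p : {j' : Fin m // j' ≠ j} × Fin δ => Q ((p.1 : Fin m), p.2)))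
        = δ + Module.finrank Fq ↥(Submodule.span Fq
            (Set.range fun p : {j' : Fin m // j' ≠ i ∧ j' ≠ j} × Fin δ =>
              DE ((p.1 : Fin m), p.2)))) := by
  classical
  have hQ' : ∀ p : Fin m × Fin δ, Q p = DE p + if p.1 = i then Δ p.2 else 0 := by
    intro p; rw [hQ]
  -- key fact: a combination of Δ's lying in U must be trivial
  have key : ∀ c : Fin δ → Fq, (∑ d, c d • Δ d) ∈ U → c = 0 := by
    intro c hc
    have hz : (∑ d, c d • Δ d) ∈ Z :=
      Submodule.sum_mem _ fun d _ => Z.smul_mem _ (hΔ d)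
    have hmem : (∑ d, c d • Δ d) ∈ U ⊓ Z := Submodule.mem_inf.mpr ⟨hc, hz⟩
    rw [hUZ, Submodule.mem_bot] at hmem
    funext d
    exact Fintype.linearIndependent_iff.mp hΔind c hmem d
  -- part (a)
  have ha : Module.finrank Fq ↥(Submodule.span Fq
      (Set.range fun p : {j : Fin m // j ≠ i} × Fin δ => Q ((p.1 : Fin m), p.2)))
      ≤ Module.finrank Fq U := by
    have hle : Submodule.span Fq
        (Set.range fun p : {j : Fin m // j ≠ i} × Fin δ => Q ((p.1 : Fin m), p.2)) ≤ U := by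
      rw [Submodule.span_le]
      rintro x ⟨p, rfl⟩
      show Q (↑p.1, p.2) ∈ (U : Set (Fin n → K))
      rw [hQ']
      rw [if_neg p.1.2, add_zero]
      exact hDE _
    exact Submodule.finrank_mono hle
  refine ⟨ha, fun h => h ▸ ha, ?_⟩
  -- part (b)
  intro j hj
  set v : Fin δ → (Fin n → K) := fun d => DE (i, d) + Δ d with hv
  set w : {j' : Fin m // j' ≠ i ∧ j' ≠ j} × Fin δ → (Fin n → K) :=
    fun p => DE ((p.1 : Fin m), p.2) with hw
  have hrange : (Set.range fun p : {j' : Fin m // j' ≠ j} × Fin δ => Q ((p.1 : Fin m), p.2))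
      = Set.range v ∪ Set.range w := by
    ext x
    constructor
    · rintro ⟨⟨⟨j', hj'⟩, d⟩, rfl⟩
      by_cases h : j' = i
      · subst h
        exact Or.inl ⟨d, by simp [hQ', hv]⟩
      · exact Or.inr ⟨(⟨j', h, hj'⟩, d), by simp [hQ', hw, h]⟩
    · rintro (⟨d, rfl⟩ | ⟨⟨⟨j', h1, h2⟩, d⟩, rfl⟩)
      · exact ⟨(⟨i, Ne.symm hj⟩, d), by simp [hQ', hv]⟩
      · exact ⟨(⟨j', h2⟩, d), by simp [hQ', hw, h1]⟩
    -- span of w is contained in U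
  have hwU : Submodule.span Fq (Set.range w) ≤ U := by
    rw [Submodule.span_le]
    rintro x ⟨p, rfl⟩
    exact hDE _
  -- v is linearly independent
  have hvind : LinearIndependent Fq v := by
    rw [Fintype.linearIndependent_iff]
    intro c hc
    have h1 : ∑ d, c d • v d = (∑ d, c d • DE (i, d)) + ∑ d, c d • Δ d := by
      simp [hv, smul_add, Finset.sum_add_distrib]
    have h2 : (∑ d, c d • Δ d) = -(∑ d, c d • DE (i, d)) := by
      rw [h1] at hc
      exact eq_neg_of_add_eq_zero_right hc
    have hU : (∑ d, c d • Δ d) ∈ U := by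
      rw [h2]
      exact U.neg_mem (Submodule.sum_mem _ fun d _ => U.smul_mem _ (hDE _))
    intro d
    exact congrFun (key c hU) d
  have hTrank : Module.finrank Fq ↥(Submodule.span Fq (Set.range v)) = δ := by
    rw [finrank_span_eq_card hvind, Fintype.card_fin]
  -- disjointness
  have hdisj : Submodule.span Fq (Set.range v) ⊓ Submodule.span Fq (Set.range w) = ⊥ := by
    rw [eq_bot_iff]
    intro x hx
    obtain ⟨hx1, hx2⟩ := Submodule.mem_inf.mp hx
    rw [Submodule.mem_span_range_iff_exists_fun Fq] at hx1
    obtain ⟨c, hc⟩ := hx1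
    have h1 : ∑ d, c d • v d = (∑ d, c d • DE (i, d)) + ∑ d, c d • Δ d := by
      simp [hv, smul_add, Finset.sum_add_distrib]
    have hU : (∑ d, c d • Δ d) ∈ U := by
      have : (∑ d, c d • Δ d) = x - ∑ d, c d • DE (i, d) := by
        rw [← hc, h1]; ring
      rw [this]
      exact U.sub_mem (hwU hx2)
        (Submodule.sum_mem _ fun d _ => U.smul_mem _ (hDE _))
    have hc0 : c = 0 := key c hU
    have : x = 0 := by
      rw [← hc, hc0]
      simp
    simp [this]
  have hsum := Submodule.finrank_sup_add_finrank_inf_eq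
    (Submodule.span Fq (Set.range v)) (Submodule.span Fq (Set.range w))
  rw [hdisj, finrank_bot, add_zero] at hsum
  rw [hrange, Submodule.span_union, hsum, hTrank]
end

section
/- Let U, Z be F_q-subspaces of F_{q^s}^n (viewed as an F_q-vector space) with U ∩ Z = {0}, let m ≥ 2, let D+E ∈ F_{q^s}^{mδ×n} have all rows in U, let Δ ∈ F_{q^s}^{δ×n} have δ rows lying in Z that are F_q-linearly independent, let v ∈ (F_q^×)^m be a vector all of whose entries are nonzero, and set Q = (D+E) + v ⊗ Δ. Then for every k ∈ {1,…,m}, the image of the F_q-row space of Q[k] under the projection of U ⊕ Z onto Z along U equals the F_q-span of the rows of Δ; in particular rank_{F_q}(Q[k]) ≥ δ for every k, so no block index is distinguished by a vanishing Z-component. -/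
/-!
A projection `π` onto `Z` along `U` sends the row `(D+E)_{j,d} + v_j Δ_d` of `Q` to `v_j Δ_d`.
Since `m ≥ 2`, some block `j ≠ k` survives in `Q[k]`, and `v_j` is invertible, so the image of
the row space of `Q[k]` is exactly the span of the rows of `Δ`. Such a projection exists because
`U ⊓ Z = ⊥`, and it cannot increase dimension, whence the rank bound.
-/

open Submodule

theorem Submodule.exists_linearProj_of_inf_eq_bot {F V : Type*} [Field F] [AddCommGroup V]
    [Module F V] {U Z : Submodule F V} (hUZ : U ⊓ Z = ⊥) :
    ∃ π : V →ₗ[F] V, (∀ x ∈ U, π x = 0) ∧ ∀ x ∈ Z, π x = x := by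
  -- lift the identity of `Z` through `Z → V ⧸ U`, which is injective as `U ⊓ Z = ⊥`
  have hker : LinearMap.ker (U.mkQ ∘ₗ Z.subtype) = ⊥ := by
    rw [LinearMap.ker_comp, ker_mkQ, ← disjoint_iff_comap_eq_bot, disjoint_iff, inf_comm, hUZ]
  obtain ⟨g, hg⟩ := (U.mkQ ∘ₗ Z.subtype).exists_leftInverse_of_injective hker
  refine ⟨Z.subtype ∘ₗ g ∘ₗ U.mkQ, fun x hx => ?_, fun x hx => ?_⟩
  · simp [(Quotient.mk_eq_zero U).mpr hx]
  · simpa using congrArg Subtype.val (LinearMap.congr_fun hg ⟨x, hx⟩)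

theorem Submodule.map_span_range_eq_of_apply_eq_smul {F V W ι κ : Type*} [Field F]
    [AddCommGroup V] [Module F V] [AddCommGroup W] [Module F W]
    (π : V →ₗ[F] W) (Q : ι → V) (Δ : κ → W) (c : ι → F) (g : ι → κ)
    (hg : Function.Surjective g) (hc : ∀ i, c i ≠ 0) (hπQ : ∀ i, π (Q i) = c i • Δ (g i)) :
    (span F (Set.range Q)).map π = span F (Set.range Δ) := by
  rw [map_span, ← Set.range_comp, ← hg.range_comp Δ]
  apply le_antisymm <;> rw [span_le] <;> rintro _ ⟨i, rfl⟩
  · have hΔ : Δ (g i) ∈ span F (Set.range (Δ ∘ g)) := subset_span ⟨i, rfl⟩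
    simpa [hπQ] using smul_mem _ (c i) hΔ
  · have hπQ' : π (Q i) ∈ span F (Set.range (π ∘ Q)) := subset_span ⟨i, rfl⟩
    simpa [hπQ, smul_smul, hc i] using smul_mem _ (c i)⁻¹ hπQ'

theorem stmt_10_general (n m δ : ℕ) (hm : 2 ≤ m)
    (Fq : Type*) [Field Fq]
    (K : Type*) [Field K] [Algebra Fq K]
    (U Z : Submodule Fq (Fin n → K)) (hUZ : U ⊓ Z = ⊥)
    (DE : Fin m × Fin δ → Fin n → K) (hDE : ∀ p, DE p ∈ U)
    (Δ : Fin δ → Fin n → K) (hΔ : ∀ d, Δ d ∈ Z)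
    (hΔind : LinearIndependent Fq Δ)
    (v : Fin m → Fq) (hv : ∀ j, v j ≠ 0)
    (Q : Fin m × Fin δ → Fin n → K)
    (hQ : Q = fun p => DE p + v p.1 • Δ p.2) :
    ∀ k : Fin m,
      (∀ π : (Fin n → K) →ₗ[Fq] (Fin n → K),
        (∀ x ∈ U, π x = 0) → (∀ x ∈ Z, π x = x) →
        Submodule.map π (Submodule.span Fq
            (Set.range fun p : {j : Fin m // j ≠ k} × Fin δ => Q ((p.1 : Fin m), p.2)))
          = Submodule.span Fq (Set.range Δ)) ∧
      δ ≤ Module.finrank Fq ↥(Submodule.span Fq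
          (Set.range fun p : {j : Fin m // j ≠ k} × Fin δ => Q ((p.1 : Fin m), p.2))) := by
  intro k
  have : Nontrivial (Fin m) := Fin.nontrivial_iff_two_le.mpr hm
  have : Nonempty {j : Fin m // j ≠ k} := nonempty_subtype.mpr (exists_ne k)
  have hmap : ∀ π : (Fin n → K) →ₗ[Fq] (Fin n → K), (∀ x ∈ U, π x = 0) → (∀ x ∈ Z, π x = x) →
      Submodule.map π (Submodule.span Fq
          (Set.range fun p : {j : Fin m // j ≠ k} × Fin δ => Q ((p.1 : Fin m), p.2)))
        = Submodule.span Fq (Set.range Δ) := fun π hπU hπZ =>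
    map_span_range_eq_of_apply_eq_smul π _ Δ (fun p => v p.1) Prod.snd Prod.snd_surjective
      (fun p => hv p.1) fun p => by simp [hQ, hπU _ (hDE _), hπZ _ (hΔ _)]
  refine ⟨hmap, ?_⟩
  obtain ⟨π, hπU, hπZ⟩ := exists_linearProj_of_inf_eq_bot hUZ
  calc δ = Module.finrank Fq (Submodule.span Fq (Set.range Δ)) := by
        rw [finrank_span_eq_card hΔind, Fintype.card_fin]
    _ ≤ _ := by
      have := Module.Finite.span_of_finite Fq
        (Set.finite_range fun p : {j : Fin m // j ≠ k} × Fin δ => Q (p.1, p.2))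
      rw [← hmap π hπU hπZ]
      exact Submodule.finrank_map_le π _

/-- CB-cPIR defeats the subquery attack: with all rows of `D+E` in `U`, the `δ` rows of
`Δ` in `Z` `F_q`-linearly independent, `U ∩ Z = {0}`, `m ≥ 2`, `v` of full Hamming
weight, and `Q = (D+E) + v ⊗ Δ`, for every block index `k` the image of the `F_q`-row
space of `Q[k]` under the projection onto `Z` along `U` equals the `F_q`-span of the rows
of `Δ`; in particular `rank_{F_q}(Q[k]) ≥ δ` for every `k`. -/
theorem stmt_10 (q s n m δ : ℕ) (hq : IsPrimePow q) (hm : 2 ≤ m)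
    (Fq : Type*) [Field Fq] [Fintype Fq] (hFq : Fintype.card Fq = q)
    (K : Type*) [Field K] [Algebra Fq K] [FiniteDimensional Fq K]
    (hs : Module.finrank Fq K = s)
    (U Z : Submodule Fq (Fin n → K)) (hUZ : U ⊓ Z = ⊥)
    (DE : Fin m × Fin δ → Fin n → K) (hDE : ∀ p, DE p ∈ U)
    (Δ : Fin δ → Fin n → K) (hΔ : ∀ d, Δ d ∈ Z)
    (hΔind : LinearIndependent Fq Δ)
    (v : Fin m → Fq) (hv : ∀ j, v j ≠ 0)
    (Q : Fin m × Fin δ → Fin n → K)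
    (hQ : Q = fun p => DE p + v p.1 • Δ p.2) :
    ∀ k : Fin m,
      (∀ π : (Fin n → K) →ₗ[Fq] (Fin n → K),
        (∀ x ∈ U, π x = 0) → (∀ x ∈ Z, π x = x) →
        Submodule.map π (Submodule.span Fq
            (Set.range fun p : {j : Fin m // j ≠ k} × Fin δ => Q ((p.1 : Fin m), p.2)))
          = Submodule.span Fq (Set.range Δ)) ∧
      δ ≤ Module.finrank Fq ↥(Submodule.span Fq
          (Set.range fun p : {j : Fin m // j ≠ k} × Fin δ => Q ((p.1 : Fin m), p.2))) :=
  stmt_10_general n m δ hm Fq K U Z hUZ DE hDE Δ hΔ hΔind v hv Q hQ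
end

section
/- Let U be a vector space over F_q with dim_{F_q} U = ns − δ, and let y_1,…,y_N with N = (m − w)δ be independent random vectors each uniformly distributed on U. Then the probability that the matrix with rows y_1,…,y_N has F_q-rank at most ns − 2δ is at most q^{(δ+1)(ns−2δ) − δ²(m−w)}. -/
/-!
A family of rank at most `k = ns - 2δ` in `U` (of dimension `d = ns - δ`) lies in some
`k`-dimensional subspace. Counting ordered bases, there are at most `q ^ (k (d - k + 1))` such
subspaces, and each contains `q ^ (k N)` families, out of `q ^ (d N)` families in all; since
`d - k = δ`, the ratio is at most `q ^ (k (δ + 1) - δ N)`.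
-/

open Module Submodule

section

variable {K V : Type*} [Field K] [AddCommGroup V] [Module K V] [FiniteDimensional K V]

theorem Submodule.exists_le_finrank_eq (P : Submodule K V) {k : ℕ} (hPk : finrank K P ≤ k)
    (hk : k ≤ finrank K V) : ∃ W : Submodule K V, P ≤ W ∧ finrank K W = k := by
  obtain ⟨j, hj⟩ := Nat.exists_eq_add_of_le hPk
  induction j generalizing P with
  | zero => exact ⟨P, le_rfl, hj.symm⟩
  | succ j ih =>
    obtain ⟨v, -, hv⟩ := SetLike.exists_of_lt (lt_top_of_finrank_lt_finrank (s := P) (by omega))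
    have hPv := finrank_sup_span_singleton hv
    obtain ⟨W, hPvW, hWk⟩ := ih (P ⊔ span K {v}) (by omega) (by omega)
    exact ⟨W, le_sup_left.trans hPvW, hWk⟩

theorem Submodule.span_range_subtype_comp_eq {k : ℕ} (W : Submodule K V) (hW : finrank K W = k)
    {b : Fin k → W} (hb : LinearIndependent K b) : span K (Set.range (W.subtype ∘ b)) = W := by
  rw [Set.range_comp, ← Submodule.map_span,
    hb.span_eq_top_of_card_eq_finrank' (by simp [hW]), Submodule.map_top, range_subtype]

variable [Fintype K]

local notation "q" => Fintype.card K

/-- Sort the linearly independent `k`-families by the `k`-dimensional subspace they span. -/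
theorem card_linearIndependent_eq_card_finrank_eq_mul (k : ℕ) :
    Nat.card {b : Fin k → V // LinearIndependent K b} =
      Nat.card {W : Submodule K V // finrank K W = k} * ∏ i : Fin k, (q ^ k - q ^ (i : ℕ)) := by
  have : Finite V := Module.finite_of_finite K
  have := Fintype.ofFinite {W : Submodule K V // finrank K W = k}
  let e : (Σ W : {W : Submodule K V // finrank K W = k},
      {b : Fin k → W.1 // LinearIndependent K b}) → {b : Fin k → V // LinearIndependent K b} :=
    fun p => ⟨p.1.1.subtype ∘ p.2.1, p.2.2.map' _ (ker_subtype _)⟩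
  have he : Function.Bijective e := by
    constructor
    · rintro ⟨⟨W, hW⟩, b, hb⟩ ⟨⟨W', hW'⟩, b', hb'⟩ h
      obtain rfl : W = W' := by
        rw [← W.span_range_subtype_comp_eq hW hb, ← W'.span_range_subtype_comp_eq hW' hb']
        exact congrArg (fun b => span K (Set.range b)) (Subtype.ext_iff.mp h)
      obtain rfl : b = b' := funext fun i => Subtype.ext (congrFun (Subtype.ext_iff.mp h) i)
      rfl
    · rintro ⟨b, hb⟩
      exact ⟨⟨⟨span K (Set.range b), finrank_span_eq_card hb |>.trans (Fintype.card_fin k)⟩,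
        fun i => ⟨b i, subset_span ⟨i, rfl⟩⟩, .of_comp (span K (Set.range b)).subtype hb⟩, rfl⟩
  rw [← Nat.card_congr (Equiv.ofBijective e he), Nat.card_sigma, Finset.sum_congr rfl
    fun W _ => W.2 ▸ card_linearIndependent W.2.ge, Finset.sum_const, Finset.card_univ,
    smul_eq_mul, Nat.card_eq_fintype_card]

theorem pow_pred_mul_le_prod_pow_sub_pow {Q : ℕ} (hQ : 2 ≤ Q) (k : ℕ) :
    Q ^ ((k - 1) * k) ≤ ∏ i : Fin k, (Q ^ k - Q ^ (i : ℕ)) := by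
  have hfactor (i : Fin k) : Q ^ (k - 1) ≤ Q ^ k - Q ^ (i : ℕ) := by
    have hi : Q ^ (i : ℕ) ≤ Q ^ (k - 1) := Nat.pow_le_pow_right (by omega) (by omega)
    have hk : Q ^ k = Q * Q ^ (k - 1) := by rw [← pow_succ', Nat.sub_add_cancel i.pos]
    have := Nat.mul_le_mul_right (Q ^ (k - 1)) hQ
    omega
  calc Q ^ ((k - 1) * k) = ∏ _i : Fin k, Q ^ (k - 1) := by simp [← pow_mul]
    _ ≤ _ := Finset.prod_le_prod' fun i _ => hfactor i

theorem natCard_fin_fun_eq_pow (N : ℕ) : Nat.card (Fin N → V) = q ^ (finrank K V * N) := by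
  rw [Nat.card_fun, Module.natCard_eq_pow_finrank (K := K), Nat.card_eq_fintype_card,
    Nat.card_fin, ← pow_mul]

theorem card_finrank_eq_le (k : ℕ) (hk : k ≤ finrank K V) :
    Nat.card {W : Submodule K V // finrank K W = k} ≤ q ^ (k * (finrank K V - k + 1)) := by
  have : Finite V := Module.finite_of_finite K
  have hexp : finrank K V * k = (k - 1) * k + k * (finrank K V - k + 1) := by
    obtain ⟨d, hd⟩ := Nat.exists_eq_add_of_le hk
    rw [hd]
    rcases k with _ | k
    · simp
    · simp only [Nat.add_sub_cancel, Nat.add_sub_cancel_left]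
      ring
  refine Nat.le_of_mul_le_mul_left ?_ (pow_pos (Fintype.card_pos (α := K)) ((k - 1) * k))
  calc q ^ ((k - 1) * k) * Nat.card {W : Submodule K V // finrank K W = k}
      ≤ (∏ i : Fin k, (q ^ k - q ^ (i : ℕ))) * Nat.card {W : Submodule K V // finrank K W = k} :=
        Nat.mul_le_mul_right _ (pow_pred_mul_le_prod_pow_sub_pow Fintype.one_lt_card k)
    _ = Nat.card {b : Fin k → V // LinearIndependent K b} := by
        rw [card_linearIndependent_eq_card_finrank_eq_mul, mul_comm]
    _ ≤ Nat.card (Fin k → V) := Nat.card_le_card_of_injective _ Subtype.val_injective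
    _ = q ^ ((k - 1) * k) * q ^ (k * (finrank K V - k + 1)) := by
        rw [natCard_fin_fun_eq_pow (K := K), hexp, pow_add]

theorem card_finrank_span_le_le (k N : ℕ) (hk : k ≤ finrank K V) :
    Nat.card {y : Fin N → V // finrank K (span K (Set.range y)) ≤ k} ≤
      q ^ (k * (finrank K V - k + 1) + k * N) := by
  have : Finite V := Module.finite_of_finite K
  have := Fintype.ofFinite {W : Submodule K V // finrank K W = k}
  choose W hyW hWk using fun y : {y : Fin N → V // finrank K (span K (Set.range y)) ≤ k} =>
    (span K (Set.range y.1)).exists_le_finrank_eq y.2 hk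
  let f (y : {y : Fin N → V // finrank K (span K (Set.range y)) ≤ k}) :
      Σ W : {W : Submodule K V // finrank K W = k}, Fin N → W.1 :=
    ⟨⟨W y, hWk y⟩, fun i => ⟨y.1 i, hyW y (subset_span ⟨i, rfl⟩)⟩⟩
  have hf : Function.Injective f := fun y y' h => Subtype.ext <| funext fun i =>
    congrFun (congrArg (fun p i => (p.2 i : V)) h) i
  calc _ ≤ Nat.card (Σ W : {W : Submodule K V // finrank K W = k}, Fin N → W.1) :=
        Nat.card_le_card_of_injective f hf
    _ = Nat.card {W : Submodule K V // finrank K W = k} * q ^ (k * N) := by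
        rw [Nat.card_sigma, Finset.sum_congr rfl fun W _ =>
            show Nat.card (Fin N → W.1) = q ^ (k * N) by rw [natCard_fin_fun_eq_pow (K := K), W.2],
          Finset.sum_const, Finset.card_univ, smul_eq_mul, Nat.card_eq_fintype_card]
    _ ≤ _ := by rw [pow_add]; exact Nat.mul_le_mul_right _ (card_finrank_eq_le k hk)

theorem card_finrank_span_le_div_card_le (k N : ℕ) (hk : k ≤ finrank K V) :
    (Nat.card {y : Fin N → V // finrank K (span K (Set.range y)) ≤ k} : ℚ) / Nat.card (Fin N → V)
      ≤ (q : ℚ) ^ ((k : ℤ) * (finrank K V - k + 1) - (finrank K V - k) * N) := by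
  have hq : (0 : ℚ) < q := by exact_mod_cast Fintype.card_pos
  rw [natCard_fin_fun_eq_pow (K := K), div_le_iff₀ (by positivity)]
  calc _ ≤ ((q ^ (k * (finrank K V - k + 1) + k * N) : ℕ) : ℚ) := by
        exact_mod_cast card_finrank_span_le_le k N hk
    _ = _ := by
        rw [Nat.cast_pow, ← zpow_natCast, Nat.cast_pow, ← zpow_natCast, ← zpow_add₀ hq.ne']
        push_cast [hk]
        congr 1
        ring

end

theorem stmt_14_general (q n s m w δ : ℕ)
    (h2δ : 2 * δ ≤ n * s)
    (Fq : Type*) [Field Fq] [Fintype Fq] (hFq : Fintype.card Fq = q)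
    (U : Type*) [AddCommGroup U] [Module Fq U] [FiniteDimensional Fq U]
    (hU : Module.finrank Fq U = n * s - δ)
    (N : ℕ) (hN : N = (m - w) * δ) :
    (Nat.card {y : Fin N → U //
          Module.finrank Fq ↥(Submodule.span Fq (Set.range y)) ≤ n * s - 2 * δ} : ℚ)
        / (Nat.card (Fin N → U) : ℚ)
      ≤ (q : ℚ) ^ ((((δ : ℤ) + 1) * ((n : ℤ) * (s : ℤ) - 2 * (δ : ℤ)))
          - (δ : ℤ) ^ 2 * ((m : ℤ) - (w : ℤ))) := by
  have hk : ((n * s - 2 * δ : ℕ) : ℤ) = n * s - 2 * δ := by omega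
  have hdim : (finrank Fq U : ℤ) = n * s - δ := by omega
  -- only `≤`, since `m - w` is truncated in `ℕ`
  have hN' : ((m : ℤ) - w) * δ ≤ N := by
    rw [hN, Nat.cast_mul]
    exact mul_le_mul_of_nonneg_right (by omega) δ.cast_nonneg
  refine (card_finrank_span_le_div_card_le (n * s - 2 * δ) N (by omega)).trans ?_
  rw [hFq, hk, hdim]
  refine zpow_le_zpow_right₀ (by exact_mod_cast hFq ▸ Fintype.card_pos) ?_
  linarith [mul_le_mul_of_nonneg_left hN' (δ.cast_nonneg : (0 : ℤ) ≤ δ)]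

/-- Combined failure-probability bound: if `dim_{F_q} U = ns − δ` and `y_1,…,y_N` with
`N = (m−w)δ` are independent uniform random vectors in `U`, then the probability that the
matrix with rows `y_1,…,y_N` has `F_q`-rank at most `ns − 2δ` is at most
`q^{(δ+1)(ns−2δ) − δ²(m−w)}`. -/
theorem stmt_14 (q n s m w δ : ℕ) (hq : IsPrimePow q) (hw : w < m) (hδ : 0 < δ)
    (h2δ : 2 * δ ≤ n * s)
    (Fq : Type*) [Field Fq] [Fintype Fq] (hFq : Fintype.card Fq = q)
    (U : Type*) [AddCommGroup U] [Module Fq U] [FiniteDimensional Fq U]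
    (hU : Module.finrank Fq U = n * s - δ)
    (N : ℕ) (hN : N = (m - w) * δ) :
    (Nat.card {y : Fin N → U //
          Module.finrank Fq ↥(Submodule.span Fq (Set.range y)) ≤ n * s - 2 * δ} : ℚ)
        / (Nat.card (Fin N → U) : ℚ)
      ≤ (q : ℚ) ^ ((((δ : ℤ) + 1) * ((n : ℤ) * (s : ℤ) - 2 * (δ : ℤ)))
          - (δ : ℤ) ^ 2 * ((m : ℤ) - (w : ℤ))) :=
  stmt_14_general q n s m w δ h2δ Fq hFq U hU N hN
end

section
/- Correctness of the HHW scheme. Let C ⊆ F_{q^s}^n be a k-dimensional F_{q^s}-linear code with information set I, let V, W be F_q-subspaces of F_{q^s} with F_{q^s} = V ⊕ W, dim_{F_q} V = v, and let δ be a positive integer. Let D ∈ F_{q^s}^{mδ×n} have every row in C, let E ∈ F_{q^s}^{mδ×n} have every row in φ_{Ī}(V^{n−k}), and let Δ ∈ F_{q^s}^{δ×n} have its δ rows in φ_{Ī}(W^{n−k}) and F_q-linearly independent. For i ∈ {1,…,m} set Q^i = D + E + e_i^m ⊗ Δ. Let X = [X^1 ⋯ X^m] ∈ F_q^{L×mδ}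 with blocks X^j ∈ F_q^{L×δ}, and let A = X·Q^i. Then: (a) each row of A decomposes uniquely as c + b with c ∈ C and b supported on Ī; (b) collecting the parts b into a matrix B, one has B = Σ_{j=1}^m X^j·E_j + X^i·Δ and the entrywise projection ψ_W(B) = X^i·Δ; and (c) X^i is the unique matrix Y ∈ F_q^{L×δ} with Y·Δ = ψ_W(B). Hence the user recovers exactly the desired file X^i. -/
/-- Correctness of the HHW scheme. With `C` a `k`-dimensional code with information set
`I`, `F_{q^s} = V ⊕ W`, rows of `D` in `C`, rows of `E` vanishing on `I` with entries in
`V`, rows of `Δ` vanishing on `I` with entries in `W` and `F_q`-linearly independent,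
query `Q^i = D + E + e_i^m ⊗ Δ`, database `X ∈ F_q^{L×mδ}` and answer `A = X·Q^i`:
(a) each row of `A` decomposes uniquely as `c + b` with `c ∈ C` and `b` supported off `I`;
(b) the off-`I` part `B` satisfies `B = Σ_j X^j·E_j + X^i·Δ` and `ψ_W(B) = X^i·Δ`;
(c) `X^i` is the unique matrix `Y` over `F_q` with `Y·Δ = ψ_W(B)`. -/
theorem stmt_17 (q s n k v m δ L : ℕ) (hq : IsPrimePow q)
    (hm : 0 < m) (hδ : 0 < δ) (hL : 0 < L)
    (Fq : Type*) [Field Fq] [Fintype Fq] (hFq : Fintype.card Fq = q)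
    (K : Type*) [Field K] [Algebra Fq K] [FiniteDimensional Fq K]
    (hs : Module.finrank Fq K = s)
    (C : Submodule K (Fin n → K)) (hC : Module.finrank K C = k)
    (I : Finset (Fin n)) (hI : I.card = k)
    (hinfo : Function.Bijective fun (c : C) (i : I) => (c : Fin n → K) (i : Fin n))
    (V W : Submodule Fq K) (hVW : IsCompl V W) (hv : Module.finrank Fq V = v)
    (ψ : K →ₗ[Fq] K) (hψV : ∀ x ∈ V, ψ x = 0) (hψW : ∀ x ∈ W, ψ x = x)
    (D E : Fin m × Fin δ → Fin n → K)
    (hD : ∀ p, D p ∈ C)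
    (hE : ∀ p, (∀ i' ∈ I, E p i' = 0) ∧ ∀ c, E p c ∈ V)
    (Δ : Fin δ → Fin n → K)
    (hΔ : ∀ d, (∀ i' ∈ I, Δ d i' = 0) ∧ ∀ c, Δ d c ∈ W)
    (hΔind : LinearIndependent Fq Δ)
    (i : Fin m) (Q : Fin m × Fin δ → Fin n → K)
    (hQ : Q = fun p => D p + E p + if p.1 = i then Δ p.2 else 0)
    (X : Fin L → Fin m × Fin δ → Fq)
    (A : Fin L → Fin n → K)
    (hA : A = fun r => ∑ p : Fin m × Fin δ, X r p • Q p)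
    (B : Fin L → Fin n → K)
    (hB : ∀ r, A r - B r ∈ C ∧ ∀ i' ∈ I, B r i' = 0) :
    (∀ r, ∃! pr : (Fin n → K) × (Fin n → K),
        pr.1 ∈ C ∧ (∀ i' ∈ I, pr.2 i' = 0) ∧ A r = pr.1 + pr.2) ∧
    (∀ r, B r = (∑ p : Fin m × Fin δ, X r p • E p) + ∑ d : Fin δ, X r (i, d) • Δ d) ∧
    (∀ r, (fun c => ψ (B r c)) = ∑ d : Fin δ, X r (i, d) • Δ d) ∧
    (∀ Y : Fin L → Fin δ → Fq,
      (∀ r, (∑ d : Fin δ, Y r d • Δ d) = fun c => ψ (B r c)) ↔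
        ∀ r d, Y r d = X r (i, d)) := by

  -- zero lemma
  have hzero : ∀ x ∈ C, (∀ i' ∈ I, x i' = 0) → x = 0 := by
    intro x hx h0
    have h := hinfo.1 (a₁ := ⟨x, hx⟩) (a₂ := (0 : C)) ?_
    · exact congrArg Subtype.val h
    · funext j
      simpa using h0 j j.2
  -- the canonical decomposition
  set c0 : Fin L → Fin n → K := fun r => ∑ p : Fin m × Fin δ, X r p • D p with hc0
  set b0 : Fin L → Fin n → K :=
    fun r => (∑ p : Fin m × Fin δ, X r p • E p) + ∑ d : Fin δ, X r (i, d) • Δ d with hb0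
  have hc0C : ∀ r, c0 r ∈ C := fun r =>
    Submodule.sum_mem C fun p _ => Submodule.smul_of_tower_mem C _ (hD p)
  have hb0I : ∀ r, ∀ i' ∈ I, b0 r i' = 0 := by
    intro r i' hi'
    simp only [hb0, Pi.add_apply, Finset.sum_apply, Pi.smul_apply]
    rw [Finset.sum_eq_zero, Finset.sum_eq_zero, add_zero]
    · intro d _; rw [(hΔ d).1 i' hi', smul_zero]
    · intro p _; rw [(hE p).1 i' hi', smul_zero]
  have hdec : ∀ r, A r = c0 r + b0 r := by
    intro r
    have hlast : ∑ p : Fin m × Fin δ, X r p • (if p.1 = i then Δ p.2 else 0 : Fin n → K)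
        = ∑ d : Fin δ, X r (i, d) • Δ d := by
      rw [Fintype.sum_prod_type]
      rw [Finset.sum_eq_single i]
      · simp
      · intro j _ hj
        apply Finset.sum_eq_zero
        intro d _
        simp [hj]
      · simp
    rw [hA, hQ]
    simp only [smul_add, Finset.sum_add_distrib, hlast, hc0, hb0]
    rw [add_assoc]
  have hBb0 : ∀ r, B r = b0 r := by
    intro r
    have h1 : B r - b0 r ∈ C := by
      have : B r - b0 r = c0 r - (A r - B r) := by
        rw [hdec r]; ring_nf
      rw [this]
      exact Submodule.sub_mem C (hc0C r) (hB r).1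
    have h2 : ∀ i' ∈ I, (B r - b0 r) i' = 0 := by
      intro i' hi'
      simp [Pi.sub_apply, (hB r).2 i' hi', hb0I r i' hi']
    have := hzero _ h1 h2
    have := sub_eq_zero.mp this
    exact this
  have hψB : ∀ r, (fun c => ψ (B r c)) = ∑ d : Fin δ, X r (i, d) • Δ d := by
    intro r
    funext c
    rw [hBb0 r]
    simp only [hb0, Pi.add_apply, Finset.sum_apply, Pi.smul_apply, map_add, map_sum,
      map_smul]
    rw [Finset.sum_eq_zero, zero_add]
    · apply Finset.sum_congr rfl
      intro d _
      rw [hψW _ ((hΔ d).2 c)]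
    · intro p _
      rw [hψV _ ((hE p).2 c), smul_zero]
  refine ⟨?_, fun r => hBb0 r, hψB, ?_⟩
  · intro r
    refine ⟨(A r - B r, B r), ⟨(hB r).1, (hB r).2, by simp⟩, ?_⟩
    rintro ⟨c', b'⟩ ⟨hc', hb', hab'⟩
    have hcc : c' - (A r - B r) ∈ C := Submodule.sub_mem C hc' (hB r).1
    have hcc2 : ∀ i' ∈ I, (c' - (A r - B r)) i' = 0 := by
      intro i' hi'
      have hb'' : b' i' = 0 := hb' i' hi'
      have h1 : c' i' = A r i' - b' i' := by
        have h := congrFun hab' i'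
        simp only [Pi.add_apply] at h
        rw [h, hb'', add_zero, sub_zero]
      simp [Pi.sub_apply, h1, hb'', (hB r).2 i' hi']
    have h0 := hzero _ hcc hcc2
    have hce : c' = A r - B r := sub_eq_zero.mp h0
    have hbe : b' = B r := by
      have h2 : b' = A r - c' := eq_sub_of_add_eq' hab'.symm
      rw [h2, hce, sub_sub_cancel]
    simp [Prod.ext_iff, hce, hbe]
  · intro Y
    constructor
    · intro hY r d
      have h := (hY r).trans (hψB r)
      have hsum : ∑ d : Fin δ, (Y r d - X r (i, d)) • Δ d = 0 := by
        simp only [sub_smul, Finset.sum_sub_distrib, h, sub_self]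
      have := Fintype.linearIndependent_iff.mp hΔind _ hsum d
      exact sub_eq_zero.mp this
    · intro hY r
      rw [hψB r]
      apply Finset.sum_congr rfl
      intro d _
      rw [hY r d]
end

section
/- Correctness of the CB-cPIR scheme. For j ∈ {1,2}, let C_j ⊆ F_{q^s}^n be k-dimensional F_{q^s}-linear codes with information sets I_j, let V_j, W_j be F_q-subspaces with F_{q^s} = V_j ⊕ W_j, let D_j have all rows in C_j, E_j have all rows in φ_{Ī_j}(V_j^{n−k}), and Δ_j ∈ F_{q^s}^{δ×n} have its δ rows in φ_{Ī_j}(W_j^{n−k}) and F_q-linearly independent. Let β ∈ (F_q^×)^m, fix i ∈ {1,…,m}, set v_1 = β, v_2 = β + e_i^m, and Q_j = D_j + E_j + v_j ⊗ Δ_j. Let X = [X^1 ⋯ X^m] ∈ F_q^{L×mδ} with blocks X^j ∈ F_q^{L×δ} and A_j = X·Q_j. Then for each j there is a unique matrix R_j ∈ F_q^{L×δ} with R_j·Δ_j = ψ_{W_j}(B_j), where B_j is the unique off-I_j-supported part of A_j obtained from the decomposition of each row of A_j as an element of C_j plus a vector supported on Ī_j; moreover R_j = Σ_{k=1}^m (v_j)_k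 X^k, and R_2 − R_1 = X^i, i.e., the user recovers exactly the desired file. -/
/-- Correctness of the CB-cPIR scheme. For `j ∈ {1,2}` (here `j : Fin 2`), with codes
`C j` with information sets `I j`, decompositions `F_{q^s} = V j ⊕ W j` with projections
`ψ j` onto `W j` along `V j`, rows of `D j` in `C j`, rows of `E j` vanishing on `I j`
with entries in `V j`, rows of `Δ j` vanishing on `I j` with entries in `W j` and
`F_q`-linearly independent, secret `β` of full weight, `v 0 = β`, `v 1 = β + e_i^m`,
queries `Q j = D j + E j + v j ⊗ Δ j`, answers `A j = X·Q j`, and `B j` the unique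
off-`I j`-supported part of `A j`: for each `j` there is a unique `R j ∈ F_q^{L×δ}` with
`R j·Δ j = ψ_{W j}(B j)`; moreover `R j = Σ_k (v j)_k X^k` and `R 1 − R 0 = X^i`. -/
theorem stmt_18 (q s n k m δ L : ℕ) (hq : IsPrimePow q)
    (hm : 0 < m) (hδ : 0 < δ) (hL : 0 < L)
    (Fq : Type*) [Field Fq] [Fintype Fq] (hFq : Fintype.card Fq = q)
    (K : Type*) [Field K] [Algebra Fq K] [FiniteDimensional Fq K]
    (hs : Module.finrank Fq K = s)
    (C : Fin 2 → Submodule K (Fin n → K)) (hC : ∀ j, Module.finrank K (C j) = k)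
    (I : Fin 2 → Finset (Fin n)) (hI : ∀ j, (I j).card = k)
    (hinfo : ∀ j, Function.Bijective
      fun (c : C j) (i : I j) => (c : Fin n → K) (i : Fin n))
    (V W : Fin 2 → Submodule Fq K) (hVW : ∀ j, IsCompl (V j) (W j))
    (ψ : Fin 2 → K →ₗ[Fq] K)
    (hψV : ∀ j, ∀ x ∈ V j, ψ j x = 0) (hψW : ∀ j, ∀ x ∈ W j, ψ j x = x)
    (D E : Fin 2 → Fin m × Fin δ → Fin n → K)
    (hD : ∀ j p, D j p ∈ C j)
    (hE : ∀ j p, (∀ i' ∈ I j, E j p i' = 0) ∧ ∀ c, E j p c ∈ V j)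
    (Δ : Fin 2 → Fin δ → Fin n → K)
    (hΔ : ∀ j d, (∀ i' ∈ I j, Δ j d i' = 0) ∧ ∀ c, Δ j d c ∈ W j)
    (hΔind : ∀ j, LinearIndependent Fq (Δ j))
    (β : Fin m → Fq) (hβ : ∀ j, β j ≠ 0)
    (i : Fin m) (v : Fin 2 → Fin m → Fq)
    (hv0 : v 0 = β) (hv1 : v 1 = fun j => β j + if j = i then 1 else 0)
    (Q : Fin 2 → Fin m × Fin δ → Fin n → K)
    (hQ : ∀ j, Q j = fun p => D j p + E j p + v j p.1 • Δ j p.2)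
    (X : Fin L → Fin m × Fin δ → Fq)
    (A : Fin 2 → Fin L → Fin n → K)
    (hA : ∀ j, A j = fun r => ∑ p : Fin m × Fin δ, X r p • Q j p)
    (B : Fin 2 → Fin L → Fin n → K)
    (hB : ∀ j r, A j r - B j r ∈ C j ∧ ∀ i' ∈ I j, B j r i' = 0) :
    (∀ j, ∃! R : Fin L → Fin δ → Fq,
        ∀ r, (∑ d : Fin δ, R r d • Δ j d) = fun c => ψ j (B j r c)) ∧
    ∀ R : Fin 2 → Fin L → Fin δ → Fq,
      (∀ j r, (∑ d : Fin δ, R j r d • Δ j d) = fun c => ψ j (B j r c)) →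
        (∀ j r d, R j r d = ∑ km : Fin m, v j km * X r (km, d)) ∧
        ∀ r d, R 1 r d - R 0 r d = X r (i, d) := by
  classical
  -- The only codeword vanishing on the information set is 0.
  have hCzero : ∀ j, ∀ x ∈ C j, (∀ i' ∈ I j, x i' = 0) → x = 0 := by
    intro j x hx h0
    have h := (hinfo j).injective (a₁ := ⟨x, hx⟩) (a₂ := (0 : C j)) (by
      funext i'
      simpa using h0 i' i'.2)
    simpa using congrArg Subtype.val h
  -- B j r = A j r - codeword part
  have hB' : ∀ j r, B j r = A j r - ∑ p : Fin m × Fin δ, X r p • D j p := by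
    intro j r
    set cw : Fin n → K := ∑ p : Fin m × Fin δ, X r p • D j p with hcwdef
    have hcw : cw ∈ C j := by
      apply Submodule.sum_mem
      intro p _
      rw [← algebraMap_smul K (X r p) (D j p)]
      exact Submodule.smul_mem _ _ (hD j p)
    have hvan : ∀ i' ∈ I j, (A j r - cw) i' = 0 := by
      intro i' hi'
      simp only [Pi.sub_apply, hA j, hcwdef, Finset.sum_apply, Pi.smul_apply]
      rw [sub_eq_zero]
      refine Finset.sum_congr rfl fun p _ => ?_
      rw [hQ j]
      simp [(hE j p).1 i' hi', (hΔ j p.2).1 i' hi']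
    have hdiff : B j r - (A j r - cw) ∈ C j := by
      have h1 : A j r - B j r ∈ C j := (hB j r).1
      have heq : B j r - (A j r - cw) = cw - (A j r - B j r) := by abel
      rw [heq]
      exact Submodule.sub_mem _ hcw h1
    have hz : B j r - (A j r - cw) = 0 := by
      apply hCzero j _ hdiff
      intro i' hi'
      simp [(hB j r).2 i' hi', hvan i' hi']
    have := sub_eq_zero.mp hz
    rw [this]
  -- Pointwise value of ψ applied to B
  have hmain : ∀ j r c, ψ j (B j r c)
      = ∑ d : Fin δ, (∑ km : Fin m, v j km * X r (km, d)) • Δ j d c := by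
    intro j r c
    have hBc : B j r c
        = ∑ p : Fin m × Fin δ, X r p • (E j p c + v j p.1 • Δ j p.2 c) := by
      rw [hB' j r]
      simp only [Pi.sub_apply, hA j, Finset.sum_apply, Pi.smul_apply]
      rw [← Finset.sum_sub_distrib]
      refine Finset.sum_congr rfl fun p _ => ?_
      rw [hQ j]
      simp only [Pi.add_apply, Pi.smul_apply, smul_add]
      abel
    rw [hBc, map_sum]
    have hstep : ∀ p : Fin m × Fin δ,
        ψ j (X r p • (E j p c + v j p.1 • Δ j p.2 c))
          = (v j p.1 * X r p) • Δ j p.2 c := by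
      intro p
      rw [map_smul, map_add, map_smul, hψV j _ ((hE j p).2 c),
        hψW j _ ((hΔ j p.2).2 c)]
      rw [zero_add, smul_smul, mul_comm]
    rw [Finset.sum_congr rfl fun p _ => hstep p]
    rw [Fintype.sum_prod_type]
    rw [Finset.sum_comm]
    refine Finset.sum_congr rfl fun d _ => ?_
    rw [Finset.sum_smul]
  -- linear independence gives uniqueness of coefficients
  have huniq : ∀ j (g : Fin δ → Fq), (∑ d : Fin δ, g d • Δ j d) = 0 → ∀ d, g d = 0 := by
    intro j
    exact Fintype.linearIndependent_iff.mp (hΔind j)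
  have hwitness : ∀ j r, (∑ d : Fin δ,
      (∑ km : Fin m, v j km * X r (km, d)) • Δ j d) = fun c => ψ j (B j r c) := by
    intro j r
    funext c
    rw [Finset.sum_apply]
    simp only [Pi.smul_apply]
    exact (hmain j r c).symm
  have hval : ∀ j (R : Fin L → Fin δ → Fq),
      (∀ r, (∑ d : Fin δ, R r d • Δ j d) = fun c => ψ j (B j r c)) →
      ∀ r d, R r d = ∑ km : Fin m, v j km * X r (km, d) := by
    intro j R hR r d
    have h0 : (∑ d' : Fin δ,
        (R r d' - ∑ km : Fin m, v j km * X r (km, d')) • Δ j d') = 0 := by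
      simp only [sub_smul]
      rw [Finset.sum_sub_distrib, hR r, hwitness j r, sub_self]
    exact sub_eq_zero.mp (huniq j _ h0 d)
  refine ⟨fun j => ⟨fun r d => ∑ km : Fin m, v j km * X r (km, d),
      fun r => hwitness j r, ?_⟩, ?_⟩
  · intro R' hR'
    funext r d
    exact hval j R' hR' r d
  · intro R hR
    refine ⟨fun j r d => hval j (R j) (hR j) r d, fun r d => ?_⟩
    rw [hval 1 (R 1) (hR 1) r d, hval 0 (R 0) (hR 0) r d,
      ← Finset.sum_sub_distrib]
    rw [hv0, hv1]
    have : ∀ km : Fin m,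
        (β km + if km = i then 1 else 0) * X r (km, d) - β km * X r (km, d)
          = if km = i then X r (km, d) else 0 := by
      intro km
      by_cases h : km = i <;> simp [h, add_mul]
    rw [Finset.sum_congr rfl fun km _ => this km]
    simp
end
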